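/- Let dθ, dr be natural numbers, n a natural number with n ≥ 1, and let λ > 0 and L > 0. Let E_θ = ℝ^{dθ}, E_r = ℝ^{dr} be Euclidean spaces, J : E_θ → E_r → ℝ, J₀ : E_θ → ℝ, θ ∈ E_θ, S ∈ E_θ, r ∈ E_r. Define G(r') := gradient of θ' ↦ J(θ', r') at θ, Agg(r') := (1/n)·(S + θ + λ·G(r')), and Φ := J₀ ∘ Agg. Let g := gradient of r' ↦ J(θ, r') at r, assume g ≠ 0, and set v := g/‖g‖. Assume: G is differentiable at r with derivative M; J₀ is differentiable at Agg(r); Φ is differentiable with L-Lipschitz gradient; and B := ⟪∇J₀(Agg(r)), M(v)⟫ > 0. Then for every ε with 0 < ε < 2λB/(nL), the poisoned reward r̂ := r − ε·v satisfies J₀(Agg(r̂)) < J₀(Agg(r)); that is, the poisoned global objective is strictly smaller than the clean global objective. -/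

import Mathlib

/-!
Since `Φ = J₀ ∘ Agg` has `L`-Lipschitz gradient, the descent lemma gives
`Φ (r - ε v) ≤ Φ r - ε ⟪∇Φ r, v⟫ + L/2 ε² ‖v‖²`. By the chain rule through the affine map
`Agg`, `⟪∇Φ r, v⟫ = λ B / n`, and `‖v‖ ≤ 1`, so the correction is negative once `ε < 2λB/(nL)`.
-/

open scoped RealInnerProductSpace

section LipschitzGradient

variable {E : Type*} [NormedAddCommGroup E] [InnerProductSpace ℝ E] [CompleteSpace E]
  {f : E → ℝ} {K : NNReal}

theorem hasDerivAt_comp_add_smul (hf : Differentiable ℝ f) (x w : E) (t : ℝ) :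
    HasDerivAt (fun s : ℝ => f (x + s • w)) ⟪gradient f (x + t • w), w⟫ t := by
  have hline : HasDerivAt (fun s : ℝ => x + s • w) w t := by
    simpa using ((hasDerivAt_id t).smul_const w).const_add x
  have := (hf (x + t • w)).hasGradientAt.hasFDerivAt.comp_hasDerivAt t hline
  rwa [InnerProductSpace.toDual_apply_apply] at this

theorem inner_gradient_sub_le_of_lipschitzWith (hlip : LipschitzWith K (gradient f))
    (x w : E) {t : ℝ} (ht : 0 ≤ t) :
    ⟪gradient f (x + t • w) - gradient f x, w⟫ ≤ K * t * ‖w‖ ^ 2 :=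
  calc ⟪gradient f (x + t • w) - gradient f x, w⟫
      ≤ ‖gradient f (x + t • w) - gradient f x‖ * ‖w‖ := real_inner_le_norm _ _
    _ ≤ K * ‖t • w‖ * ‖w‖ := by
        gcongr
        simpa [dist_eq_norm] using hlip.dist_le_mul (x + t • w) x
    _ = K * t * ‖w‖ ^ 2 := by rw [norm_smul, Real.norm_of_nonneg ht]; ring

theorem le_add_inner_gradient_add_of_lipschitzWith (hf : Differentiable ℝ f)
    (hlip : LipschitzWith K (gradient f)) (x w : E) :
    f (x + w) ≤ f x + ⟪gradient f x, w⟫ + K / 2 * ‖w‖ ^ 2 := by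
  -- the gap between `f` and its quadratic upper model along the segment, which cannot grow
  set ψ : ℝ → ℝ := fun t => f (x + t • w) - t * ⟪gradient f x, w⟫ - K / 2 * t ^ 2 * ‖w‖ ^ 2
  have hψ : ∀ t, HasDerivAt ψ
      (⟪gradient f (x + t • w), w⟫ - ⟪gradient f x, w⟫ - K * t * ‖w‖ ^ 2) t := by
    intro t
    refine (((hasDerivAt_comp_add_smul hf x w t).sub ((hasDerivAt_id' t).mul_const _)).sub
      (((hasDerivAt_pow 2 t).const_mul (K / 2 : ℝ)).mul_const (‖w‖ ^ 2))).congr_deriv ?_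
    push_cast; ring
  have hanti : AntitoneOn ψ (Set.Ici 0) := by
    refine antitoneOn_of_hasDerivWithinAt_nonpos (convex_Ici 0)
      (fun t _ => (hψ t).continuousAt.continuousWithinAt)
      (fun t _ => (hψ t).hasDerivWithinAt) fun t ht => ?_
    rw [interior_Ici, Set.mem_Ioi] at ht
    have := inner_gradient_sub_le_of_lipschitzWith hlip x w ht.le
    rw [inner_sub_left] at this
    linarith
  have := hanti Set.self_mem_Ici (Set.mem_Ici.2 zero_le_one) zero_le_one
  simp only [ψ, zero_smul, one_smul, add_zero, zero_mul, one_mul, one_pow, mul_one,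
    sub_zero, ne_eq, OfNat.ofNat_ne_zero, not_false_eq_true, zero_pow, mul_zero] at this
  linarith

theorem apply_sub_smul_lt_of_lipschitzWith_gradient (hf : Differentiable ℝ f)
    (hlip : LipschitzWith K (gradient f)) {x v : E} {ε : ℝ} (hε : 0 < ε)
    (hstep : ε * K * ‖v‖ ^ 2 < 2 * ⟪gradient f x, v⟫) :
    f (x - ε • v) < f x := by
  have := le_add_inner_gradient_add_of_lipschitzWith hf hlip x (-(ε • v))
  rw [← sub_eq_add_neg, inner_neg_right, real_inner_smul_right, norm_neg, norm_smul,
    Real.norm_of_nonneg hε.le] at this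
  nlinarith

end LipschitzGradient

theorem inner_gradient_comp {E F : Type*} [NormedAddCommGroup E] [InnerProductSpace ℝ E]
    [CompleteSpace E] [NormedAddCommGroup F] [InnerProductSpace ℝ F] [CompleteSpace F]
    {g : F → ℝ} {A : E → F} {A' : E →L[ℝ] F} {x : E}
    (hg : DifferentiableAt ℝ g (A x)) (hA : HasFDerivAt A A' x) (v : E) :
    ⟪gradient (g ∘ A) x, v⟫ = ⟪gradient g (A x), A' v⟫ := by
  rw [inner_gradient_left, inner_gradient_left, (hg.hasFDerivAt.comp x hA).fderiv]
  rfl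

theorem stmt_7_general (dθ dr : ℕ) (n : ℕ) (lam L : ℝ)
    (hL : 0 < L)
    (J₀ : EuclideanSpace ℝ (Fin dθ) → ℝ)
    (θ S : EuclideanSpace ℝ (Fin dθ)) (r : EuclideanSpace ℝ (Fin dr))
    (G : EuclideanSpace ℝ (Fin dr) → EuclideanSpace ℝ (Fin dθ))
    (Agg : EuclideanSpace ℝ (Fin dr) → EuclideanSpace ℝ (Fin dθ))
    (hAgg : ∀ r', Agg r' = (n : ℝ)⁻¹ • (S + θ + lam • G r'))
    (Φ : EuclideanSpace ℝ (Fin dr) → ℝ) (hΦ : Φ = J₀ ∘ Agg)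
    (g : EuclideanSpace ℝ (Fin dr))
    (v : EuclideanSpace ℝ (Fin dr)) (hv : v = ‖g‖⁻¹ • g)
    (M : EuclideanSpace ℝ (Fin dr) →L[ℝ] EuclideanSpace ℝ (Fin dθ))
    (hM : HasFDerivAt G M r)
    (hJ₀ : DifferentiableAt ℝ J₀ (Agg r))
    (hΦdiff : Differentiable ℝ Φ)
    (hΦlip : LipschitzWith L.toNNReal (gradient Φ))
    (B : ℝ) (hB : B = ⟪gradient J₀ (Agg r), M v⟫) :
    ∀ ε : ℝ, 0 < ε → ε < 2 * lam * B / (n * L) →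
      J₀ (Agg (r - ε • v)) < J₀ (Agg r) := by
  intro ε hε hεlt
  have hAgg' : HasFDerivAt Agg ((n : ℝ)⁻¹ • lam • M) r := by
    rw [funext hAgg]
    exact ((hM.const_smul lam).const_add (S + θ)).const_smul (n : ℝ)⁻¹
  have hslope : ⟪gradient Φ r, v⟫ = lam * B / n := by
    rw [hΦ, inner_gradient_comp hJ₀ hAgg', hB]
    simp only [smul_apply, real_inner_smul_right]
    ring
  have hv1 : ‖v‖ ≤ 1 := by
    rw [hv, norm_smul, norm_inv, norm_norm]
    exact inv_mul_le_one
  have hεL : ε * L < 2 * (lam * B / n) := by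
    rwa [show 2 * lam * B / (n * L) = 2 * (lam * B / n) / L by ring, lt_div_iff₀ hL] at hεlt
  have hstep : ε * L.toNNReal * ‖v‖ ^ 2 < 2 * ⟪gradient Φ r, v⟫ := by
    rw [Real.coe_toNNReal L hL.le, hslope]
    calc ε * L * ‖v‖ ^ 2 ≤ ε * L := by
          apply mul_le_of_le_one_right (by positivity)
          exact pow_le_one₀ (norm_nonneg v) hv1
      _ < 2 * (lam * B / n) := hεL
  simpa [hΦ] using apply_sub_smul_lt_of_lipschitzWith_gradient hΦdiff hΦlip hε hstep

/-- Theorem 1 of the paper: in the FRL setting with single-step local training,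
a single poisoned agent, and FedAVG aggregation, if `B > 0` and the attack budget
satisfies `0 < ε < 2λB/(nL)`, then the poisoned global objective is strictly smaller
than the clean global objective. -/
theorem stmt_7 (dθ dr : ℕ) (n : ℕ) (hn : 1 ≤ n) (lam L : ℝ)
    (hlam : 0 < lam) (hL : 0 < L)
    (J : EuclideanSpace ℝ (Fin dθ) → EuclideanSpace ℝ (Fin dr) → ℝ)
    (J₀ : EuclideanSpace ℝ (Fin dθ) → ℝ)
    (θ S : EuclideanSpace ℝ (Fin dθ)) (r : EuclideanSpace ℝ (Fin dr))
    (G : EuclideanSpace ℝ (Fin dr) → EuclideanSpace ℝ (Fin dθ))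
    (hG : ∀ r', G r' = gradient (fun θ' => J θ' r') θ)
    (Agg : EuclideanSpace ℝ (Fin dr) → EuclideanSpace ℝ (Fin dθ))
    (hAgg : ∀ r', Agg r' = (n : ℝ)⁻¹ • (S + θ + lam • G r'))
    (Φ : EuclideanSpace ℝ (Fin dr) → ℝ) (hΦ : Φ = J₀ ∘ Agg)
    (g : EuclideanSpace ℝ (Fin dr))
    (hg : g = gradient (fun r' => J θ r') r) (hg0 : g ≠ 0)
    (v : EuclideanSpace ℝ (Fin dr)) (hv : v = ‖g‖⁻¹ • g)
    (M : EuclideanSpace ℝ (Fin dr) →L[ℝ] EuclideanSpace ℝ (Fin dθ))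
    (hM : HasFDerivAt G M r)
    (hJ₀ : DifferentiableAt ℝ J₀ (Agg r))
    (hΦdiff : Differentiable ℝ Φ)
    (hΦlip : LipschitzWith L.toNNReal (gradient Φ))
    (B : ℝ) (hB : B = ⟪gradient J₀ (Agg r), M v⟫) (hBpos : 0 < B) :
    ∀ ε : ℝ, 0 < ε → ε < 2 * lam * B / (n * L) →
      J₀ (Agg (r - ε • v)) < J₀ (Agg r) :=
  stmt_7_general dθ dr n lam L hL J₀ θ S r G Agg hAgg Φ hΦ g v hv M hM hJ₀ hΦdiff hΦlip B hB
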